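/- Let ℍ = [0,1]² be the unit square, let 0 < r ≤ 1/4, let A_r = {(x,y) ∈ ℍ : x + y ≤ r}, and let Q = [1/4, 3/4]². If w₁ ∈ ℍ \ A_r and w₂ ∈ A_r, then Q ⊄ H₂(w₁,w₂); i.e. when the convex hull of the group equals Q, a candidate inside A_r can be accepted only if both candidates lie in A_r. Consequently, vol(E_ℍ(A_r, Q)) ≤ vol(A_r)² = r⁴/4. -/

import Mathlib

open MeasureTheory Metric Set
open scoped RealInnerProductSpace ENNReal

noncomputable section

/-- Points of the plane (with the Euclidean norm). -/
abbrev Pt : Type := EuclideanSpace ℝ (Fin 2)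

/-- The Voronoi cell of `w₁` (against competitor `w₂`) inside `K`. -/
def vcell (K : Set Pt) (w₁ w₂ : Pt) : Set Pt := {v ∈ K | dist v w₁ ≤ dist v w₂}

/-- The acceptance event `E_K(H, A)`: the set of candidate pairs `(w₁, w₂) ∈ K × K` such
that some candidate `wᵢ` lies in `H` and `A` is contained in its Voronoi cell, i.e. a
candidate inside `H` is accepted when the convex hull of the group is `A`. -/
def accEvent (K H A : Set Pt) : Set (Pt × Pt) :=
  {p | p.1 ∈ K ∧ p.2 ∈ K ∧
    ((p.1 ∈ H ∧ A ⊆ vcell K p.1 p.2) ∨ (p.2 ∈ H ∧ A ⊆ vcell K p.2 p.1))}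

/-- The unit square `[0,1]²` in the plane. -/
def unitSquare : Set Pt := {x : Pt | ∀ i, x i ∈ Set.Icc (0 : ℝ) 1}

/-- The central square `Q = [1/4, 3/4]²`. -/
def midSquare : Set Pt := {x : Pt | ∀ i, x i ∈ Set.Icc (1 / 4 : ℝ) (3 / 4)}

/-
A candidate `w₂` in the corner triangle `A_r` never has `Q` in its cell against a candidate
`w₁ ∉ A_r`: some corner of `Q` is strictly closer to `w₁`, namely `(1/4, 3/4)` if `w₁` lies weakly
left of `w₂`, `(3/4, 1/4)` if it lies weakly below, and `(3/4, 3/4)` if it lies strictly up and to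
the right. So every pair in `E_ℍ(A_r, Q)` lies in `A_r × A_r`, and `A_r` is contained in a right
triangle of area `r² / 2`.
-/

def cornerTriangle (r : ℝ) : Set Pt := {x ∈ unitSquare | x 0 + x 1 ≤ r}

lemma dist_lt_dist_iff_sq_add_sq (q w₁ w₂ : Pt) :
    dist q w₁ < dist q w₂ ↔
      (q 0 - w₁ 0) ^ 2 + (q 1 - w₁ 1) ^ 2 < (q 0 - w₂ 0) ^ 2 + (q 1 - w₂ 1) ^ 2 := by
  simp only [← sq_lt_sq₀ dist_nonneg dist_nonneg, EuclideanSpace.dist_sq_eq, Fin.sum_univ_two,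
    Real.dist_eq, sq_abs]

lemma mk_mem_midSquare {a b : ℝ} (ha : a ∈ Icc (1 / 4 : ℝ) (3 / 4))
    (hb : b ∈ Icc (1 / 4 : ℝ) (3 / 4)) : !₂[a, b] ∈ midSquare :=
  Fin.forall_fin_two.2 ⟨ha, hb⟩

lemma sq_add_sq_lt_of_le_of_add_lt {a₁ b₁ a₂ b₂ : ℝ} (ha₁ : 0 ≤ a₁) (ha : a₁ ≤ a₂) (hb₁ : b₁ ≤ 1)
    (hsum : a₂ + b₂ < a₁ + b₁) (h₂ : a₂ + b₂ ≤ 1 / 4) :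
    (1 / 4 - a₁) ^ 2 + (3 / 4 - b₁) ^ 2 < (1 / 4 - a₂) ^ 2 + (3 / 4 - b₂) ^ 2 := by
  nlinarith [mul_nonneg (sub_nonneg.2 ha) (sub_nonneg.2 hb₁), mul_nonneg ha₁ (sub_nonneg.2 hb₁),
    mul_pos (sub_pos.2 hsum) (sub_pos.2 hsum)]

lemma exists_mem_midSquare_dist_lt {w₁ w₂ : Pt} (hw₁ : w₁ ∈ unitSquare) (hw₂ : w₂ ∈ unitSquare)
    (hsum : w₂ 0 + w₂ 1 < w₁ 0 + w₁ 1) (h₂ : w₂ 0 + w₂ 1 ≤ 1 / 4) :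
    ∃ q ∈ midSquare, dist q w₁ < dist q w₂ := by
  obtain ⟨⟨ha₁, ha₁'⟩, ⟨hb₁, hb₁'⟩⟩ := Fin.forall_fin_two.1 hw₁
  obtain ⟨⟨ha₂, -⟩, ⟨hb₂, -⟩⟩ := Fin.forall_fin_two.1 hw₂
  simp only [dist_lt_dist_iff_sq_add_sq]
  rcases le_or_gt (w₁ 0) (w₂ 0) with ha | ha
  · exact ⟨!₂[1 / 4, 3 / 4], mk_mem_midSquare (by norm_num) (by norm_num),
      sq_add_sq_lt_of_le_of_add_lt ha₁ ha hb₁' hsum h₂⟩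
  rcases le_or_gt (w₁ 1) (w₂ 1) with hb | hb
  · refine ⟨!₂[3 / 4, 1 / 4], mk_mem_midSquare (by norm_num) (by norm_num), ?_⟩
    have := sq_add_sq_lt_of_le_of_add_lt (b₂ := w₂ 0) hb₁ hb ha₁' (by linarith) (by linarith)
    simp only [Matrix.cons_val_zero, Matrix.cons_val_one]
    linarith
  · refine ⟨!₂[3 / 4, 3 / 4], mk_mem_midSquare (by norm_num) (by norm_num), ?_⟩
    simp only [Matrix.cons_val_zero, Matrix.cons_val_one]
    nlinarith

lemma not_midSquare_subset_vcell {r : ℝ} (hr : r ≤ 1 / 4) :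
    ∀ w₁ ∈ unitSquare \ cornerTriangle r, ∀ w₂ ∈ cornerTriangle r,
      ¬ midSquare ⊆ vcell unitSquare w₂ w₁ := by
  intro w₁ hw₁ w₂ hw₂ hsub
  have hsum : w₂ 0 + w₂ 1 < w₁ 0 + w₁ 1 := by
    by_contra! h
    exact hw₁.2 ⟨hw₁.1, h.trans hw₂.2⟩
  obtain ⟨q, hq, hlt⟩ := exists_mem_midSquare_dist_lt hw₁.1 hw₂.1 hsum (hw₂.2.trans hr)
  exact (hsub hq).2.not_gt hlt

lemma accEvent_subset_prod {K H A : Set Pt}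
    (h : ∀ w₁ ∈ K \ H, ∀ w₂ ∈ H, ¬ A ⊆ vcell K w₂ w₁) : accEvent K H A ⊆ H ×ˢ H := by
  rintro ⟨w₁, w₂⟩ ⟨hw₁, hw₂, ⟨hw₁H, hcell⟩ | ⟨hw₂H, hcell⟩⟩
  · exact ⟨hw₁H, by_contra fun hw₂H => h w₂ ⟨hw₂, hw₂H⟩ w₁ hw₁H hcell⟩
  · exact ⟨by_contra fun hw₁H => h w₁ ⟨hw₁, hw₁H⟩ w₂ hw₂H hcell, hw₂H⟩

lemma volume_region_between_cc_eq_lintegral {α : Type*} [MeasurableSpace α] {μ : Measure α}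
    {f g : α → ℝ} {s : Set α} (hf : Measurable f) (hg : Measurable g) (hs : MeasurableSet s) :
    μ.prod volume {p : α × ℝ | p.1 ∈ s ∧ p.2 ∈ Icc (f p.1) (g p.1)} =
      ∫⁻ x in s, ENNReal.ofReal (g x - f x) ∂μ := by
  rw [Measure.prod_apply (measurableSet_region_between_cc hf hg hs), ← lintegral_indicator hs]
  congr 1 with x
  by_cases hx : x ∈ s
  · rw [indicator_of_mem hx, ← Real.volume_Icc]
    congr 1 with y
    simp [hx]
  · simp [hx]

lemma volume_triangle {r : ℝ} (hr : 0 ≤ r) :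
    volume {p : ℝ × ℝ | p.1 ∈ Icc 0 r ∧ p.2 ∈ Icc 0 (r - p.1)} = ENNReal.ofReal (r ^ 2 / 2) := by
  rw [Measure.volume_eq_prod, volume_region_between_cc_eq_lintegral (f := fun _ => 0)
    (g := fun x => r - x) (by fun_prop) (by fun_prop) measurableSet_Icc,
    ← ofReal_integral_eq_lintegral_ofReal, integral_Icc_eq_integral_Ioc,
    ← intervalIntegral.integral_of_le hr]
  · simp only [sub_zero, intervalIntegral.integral_sub intervalIntegrable_const
      intervalIntegral.intervalIntegrable_id, intervalIntegral.integral_const, integral_id,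
      smul_eq_mul]
    ring_nf
  · exact (by fun_prop : Continuous fun x : ℝ => r - x - 0).integrableOn_Icc
  · exact (ae_restrict_iff' measurableSet_Icc).2 (.of_forall fun x hx => by simpa using hx.2)

lemma volume_cornerTriangle_le {r : ℝ} (hr : 0 ≤ r) :
    volume (cornerTriangle r) ≤ ENNReal.ofReal (r ^ 2 / 2) := by
  let e : Pt ≃ᵐ ℝ × ℝ :=
    (MeasurableEquiv.toLp 2 (Fin 2 → ℝ)).symm.trans MeasurableEquiv.finTwoArrow
  have he : MeasurePreserving e volume volume :=
    (volume_preserving_finTwoArrow ℝ).comp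
      (EuclideanSpace.volume_preserving_symm_measurableEquiv_toLp (Fin 2))
  rw [← volume_triangle hr, ← he.measure_preimage_equiv]
  refine measure_mono fun x ⟨hx, hxr⟩ => ?_
  obtain ⟨⟨ha, -⟩, ⟨hb, -⟩⟩ := Fin.forall_fin_two.1 hx
  change x 0 ∈ Icc 0 r ∧ x 1 ∈ Icc 0 (r - x 0)
  exact ⟨⟨ha, by linarith⟩, ⟨hb, by linarith⟩⟩

/-- Let `0 < r ≤ 1/4`, `A_r = {(x,y) ∈ ℍ : x + y ≤ r}` and
`Q = [1/4, 3/4]²`. If `w₁ ∈ ℍ \ A_r` and `w₂ ∈ A_r` then `Q ⊄ H₂(w₁, w₂)`: when the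
convex hull of the group equals `Q`, a candidate inside `A_r` can only be accepted if both
candidates lie in `A_r`. Consequently `vol (E_ℍ(A_r, Q)) ≤ vol(A_r)² = r⁴/4`. -/
theorem accept_in_corner_needs_both_candidates (r : ℝ) (hr0 : 0 < r) (hr : r ≤ 1 / 4) :
    (∀ w₁ ∈ unitSquare \ {x ∈ unitSquare | x 0 + x 1 ≤ r},
      ∀ w₂ ∈ {x ∈ unitSquare | x 0 + x 1 ≤ r},
        ¬ midSquare ⊆ vcell unitSquare w₂ w₁) ∧
      volume (accEvent unitSquare {x ∈ unitSquare | x 0 + x 1 ≤ r} midSquare)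
        ≤ ENNReal.ofReal (r ^ 4 / 4) := by
  refine ⟨not_midSquare_subset_vcell hr, ?_⟩
  calc volume (accEvent unitSquare (cornerTriangle r) midSquare)
      ≤ volume (cornerTriangle r ×ˢ cornerTriangle r) := by
        gcongr
        exact accEvent_subset_prod (not_midSquare_subset_vcell hr)
    _ = volume (cornerTriangle r) * volume (cornerTriangle r) := by
        rw [Measure.volume_eq_prod, Measure.prod_prod]
    _ ≤ ENNReal.ofReal (r ^ 2 / 2) * ENNReal.ofReal (r ^ 2 / 2) := by
        gcongr <;> exact volume_cornerTriangle_le hr0.le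
    _ = ENNReal.ofReal (r ^ 4 / 4) := by
        rw [← ENNReal.ofReal_mul (by positivity)]
        ring_nf
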